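/- arXiv:1805.11120 — 9 statements merged into one kernel-verified Lean document; each statement's English description precedes it below -/
import Mathlib

section
/- For every admissible tensor F on V, the reconstruction formula F(x,y,z) = (1/4)[N(φx,y,z) + N(φx,z,y) + N̂(φx,y,z) + N̂(φx,z,y)] − (1/2)η(x)[N(ξ,y,φz) + N̂(ξ,y,φz) + η(z)N̂(ξ,ξ,φy)] holds for all x,y,z ∈ V, where N and N̂ are the Nijenhuis tensor and the associated Nijenhuis tensor of F. -/
open scoped RealInnerProductSpace

noncomputable section

/-- An almost paracontact almost paracomplex structure compatible with the inner
product on a real inner product space `V` of dimension `2 * n + 1`. -/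
structure APAP (n : ℕ) (V : Type*) [NormedAddCommGroup V] [InnerProductSpace ℝ V] where
  phi : V →ₗ[ℝ] V
  xi : V
  eta : V →ₗ[ℝ] ℝ
  dim_eq : Module.finrank ℝ V = 2 * n + 1
  phi_xi : phi xi = 0
  phi_phi : ∀ x : V, phi (phi x) = x - eta x • xi
  eta_phi : ∀ x : V, eta (phi x) = 0
  eta_xi : eta xi = 1
  trace_phi : LinearMap.trace ℝ V phi = 0
  compat : ∀ x y : V, ⟪phi x, phi y⟫ = ⟪x, y⟫ - eta x * eta y
  inner_xi : ∀ x : V, ⟪x, xi⟫ = eta x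

variable {n : ℕ} {V : Type*} [NormedAddCommGroup V] [InnerProductSpace ℝ V]

/-- The defining symmetries of the fundamental tensor `F`. -/
def APAP.Admissible (S : APAP n V) (F : V →ₗ[ℝ] V →ₗ[ℝ] V →ₗ[ℝ] ℝ) : Prop :=
  (∀ x y z : V, F x y z = F x z y) ∧
  (∀ x y z : V, F x y z =
    -F x (S.phi y) (S.phi z) + S.eta y * F x S.xi z + S.eta z * F x y S.xi)

/-- The Nijenhuis tensor of `F`. -/
def APAP.nij (S : APAP n V) (F : V →ₗ[ℝ] V →ₗ[ℝ] V →ₗ[ℝ] ℝ) (x y z : V) : ℝ :=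
  F (S.phi x) y z - F (S.phi y) x z - F x y (S.phi z) + F y x (S.phi z)
    + S.eta z * (F x (S.phi y) S.xi - F y (S.phi x) S.xi)

/-- The associated Nijenhuis tensor of `F`. -/
def APAP.nijA (S : APAP n V) (F : V →ₗ[ℝ] V →ₗ[ℝ] V →ₗ[ℝ] ℝ) (x y z : V) : ℝ :=
  F (S.phi x) y z + F (S.phi y) x z - F x y (S.phi z) - F y x (S.phi z)
    + S.eta z * (F x (S.phi y) S.xi + F y (S.phi x) S.xi)

set_option maxHeartbeats 1000000 in
/-- reconstruction of `F` from the pair of Nijenhuis tensors. -/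
theorem statement0 (hn : 1 ≤ n) (S : APAP n V) (F : V →ₗ[ℝ] V →ₗ[ℝ] V →ₗ[ℝ] ℝ)
    (hF : S.Admissible F) :
    ∀ x y z : V, F x y z =
      (1 / 4) * (S.nij F (S.phi x) y z + S.nij F (S.phi x) z y
          + S.nijA F (S.phi x) y z + S.nijA F (S.phi x) z y)
      - (1 / 2) * S.eta x * (S.nij F S.xi y (S.phi z) + S.nijA F S.xi y (S.phi z)
          + S.eta z * S.nijA F S.xi S.xi (S.phi y)) := by
  obtain ⟨hsym, hadm⟩ := hF
  intro x y z
  have hxx : ∀ w : V, F w S.xi S.xi = 0 := by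
    intro w
    have h := hadm w S.xi S.xi
    simp only [S.phi_xi, S.eta_xi, map_zero, LinearMap.zero_apply, one_mul, neg_zero] at h
    linarith
  -- F a y (φz) + F a (φy) z = η y * F a ξ (φz) + η z * F a (φy) ξ
  have hR : ∀ a u w : V, F a u (S.phi w) + F a (S.phi u) w
      = S.eta u * F a S.xi (S.phi w) + S.eta w * F a (S.phi u) S.xi := by
    intro a u w
    have h := hadm a (S.phi u) w
    rw [S.phi_phi u] at h
    simp only [S.eta_phi, map_sub, map_smul, LinearMap.sub_apply, LinearMap.smul_apply,
      smul_eq_mul, zero_mul] at h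
    linarith
  -- symmetric sum
  have hkey : ∀ a u w : V, F a u (S.phi w) + F a w (S.phi u)
      = S.eta u * F a (S.phi w) S.xi + S.eta w * F a (S.phi u) S.xi := by
    intro a u w
    have h1 := hR a u w
    have h2 := hR a w u
    have e1 : F a (S.phi u) w = F a w (S.phi u) := hsym a (S.phi u) w
    have e2 : F a (S.phi w) u = F a u (S.phi w) := hsym a (S.phi w) u
    have e3 : F a S.xi (S.phi w) = F a (S.phi w) S.xi := hsym a S.xi (S.phi w)
    have e4 : F a S.xi (S.phi u) = F a (S.phi u) S.xi := hsym a S.xi (S.phi u)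
    linear_combination (1/2)*h1 + (1/2)*h2 - (1/2)*e1 - (1/2)*e2 + (S.eta u/2)*e3 + (S.eta w/2)*e4
  simp only [APAP.nij, APAP.nijA, S.phi_phi, S.phi_xi, S.eta_phi, S.eta_xi, map_sub,
    map_smul, map_zero, LinearMap.sub_apply, LinearMap.smul_apply, LinearMap.zero_apply,
    smul_eq_mul, zero_mul, one_mul, mul_zero, sub_zero, zero_sub, zero_add, add_zero]
  have k1 := hkey (S.phi x) y z
  have k2 := hxx y
  have k3 := hxx z
  have k4 := hxx S.xi
  have s1 : F S.xi y z = F S.xi z y := hsym S.xi y z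
  have s2 : F S.xi y S.xi = F S.xi S.xi y := hsym S.xi y S.xi
  have s3 : F x y z = F x z y := hsym x y z
  linear_combination (1/2)*k1 + (1/2)*s3 - (S.eta x/2)*s1 + (S.eta x*S.eta z)*s2 + (S.eta x*S.eta y*S.eta z)*k4
end
end

section
/- An admissible tensor F on V vanishes identically if and only if both its Nijenhuis tensor N and its associated Nijenhuis tensor N̂ vanish identically. -/
open scoped RealInnerProductSpace

noncomputable section

variable {n : ℕ} {V : Type*} [NormedAddCommGroup V] [InnerProductSpace ℝ V]

/-- `F = 0` iff both Nijenhuis tensors vanish. -/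
theorem statement1 (hn : 1 ≤ n) (S : APAP n V) (F : V →ₗ[ℝ] V →ₗ[ℝ] V →ₗ[ℝ] ℝ)
    (hF : S.Admissible F) :
    (∀ x y z : V, F x y z = 0) ↔
      ((∀ x y z : V, S.nij F x y z = 0) ∧ (∀ x y z : V, S.nijA F x y z = 0)) := by
  obtain ⟨hsym, hadm⟩ := hF
  constructor
  · intro h
    refine ⟨fun x y z => ?_, fun x y z => ?_⟩ <;> simp [APAP.nij, APAP.nijA, h]
  · rintro ⟨hN, hNA⟩
    have key : ∀ x y z : V,
        F (S.phi x) y z = F x y (S.phi z) - S.eta z * F x (S.phi y) S.xi := by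
      intro x y z
      have h1 := hN x y z
      have h2 := hNA x y z
      simp only [APAP.nij, APAP.nijA] at h1 h2
      linarith
    have hxixi : ∀ x : V, F x S.xi S.xi = 0 := by
      intro x
      have h := hadm x S.xi S.xi
      simp only [S.phi_xi, S.eta_xi, map_zero, LinearMap.zero_apply, one_mul,
        neg_zero, zero_add] at h
      linarith
    have hdag : ∀ x y z : V, F x y (S.phi z) - S.eta z * F x (S.phi y) S.xi
        = F x (S.phi y) z - S.eta y * F x (S.phi z) S.xi := by
      intro x y z
      have h1 := key x y z
      have h2 := key x z y
      rw [hsym (S.phi x) y z] at h1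
      rw [hsym x z (S.phi y)] at h2
      linarith
    have hxiphi : ∀ x z : V, F x S.xi (S.phi z) = 0 := by
      intro x z
      have h := hdag x S.xi z
      simp only [S.phi_xi, S.eta_xi, map_zero, LinearMap.zero_apply, one_mul,
        mul_zero, sub_zero, zero_sub] at h
      have hs := hsym x S.xi (S.phi z)
      linarith
    have hxi : ∀ x w : V, F x S.xi w = 0 := by
      intro x w
      have hw : w = S.phi (S.phi w) + S.eta w • S.xi := by
        rw [S.phi_phi]; abel
      rw [hw]
      simp [hxiphi, hxixi]
    have hxi' : ∀ x y : V, F x y S.xi = 0 := by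
      intro x y
      rw [hsym]; exact hxi x y
    have h7 : ∀ x y z : V, F x (S.phi y) z = - F x y (S.phi z) := by
      intro x y z
      have h := hadm x (S.phi y) z
      rw [S.phi_phi] at h
      simp only [S.eta_phi, zero_mul, add_zero, hxi', mul_zero, map_sub,
        LinearMap.sub_apply, map_smul, LinearMap.smul_apply, smul_eq_mul,
        hxi, sub_zero] at h
      linarith
    have h8 : ∀ x y z : V, F x y (S.phi z) = 0 := by
      intro x y z
      have h := hdag x y z
      rw [hxi', hxi'] at h
      have h' := h7 x y z
      simp only [mul_zero, sub_zero] at h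
      linarith
    intro x y z
    have hz : z = S.phi (S.phi z) + S.eta z • S.xi := by
      rw [S.phi_phi]; abel
    rw [hz]
    simp [h8, hxi']
end
end

section
/- For every admissible tensor F on V, F(φx,y,z) = (1/4)[N(x,y,z) + N(x,z,y) + N̂(x,y,z) + N̂(x,z,y)] holds for all x,y,z ∈ V, where N and N̂ are the Nijenhuis tensor and the associated Nijenhuis tensor of F. -/
open scoped RealInnerProductSpace

noncomputable section

variable {n : ℕ} {V : Type*} [NormedAddCommGroup V] [InnerProductSpace ℝ V]

/-! The sum `N + N̂` kills the terms of `N` that are antisymmetric in `x, y`, leaving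
`2 (F(φx,y,z) - F(x,y,φz) + η(z) F(x,φy,ξ))`. Symmetrising in `y, z` turns the first term into
`4 F(φx,y,z)`, and the remaining terms cancel: applying the admissibility identity to `(φy, z)`
and using `φ² = id - η ⊗ ξ` expresses `F(x,y,φz) + F(x,z,φy)` through the `ξ`-components. -/

namespace APAP

variable (S : APAP n V) (F : V →ₗ[ℝ] V →ₗ[ℝ] V →ₗ[ℝ] ℝ)

theorem nij_add_nijA (x y z : V) :
    S.nij F x y z + S.nijA F x y z =
      2 * (F (S.phi x) y z - F x y (S.phi z) + S.eta z * F x (S.phi y) S.xi) := by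
  simp only [nij, nijA]
  ring

variable {S F}

theorem Admissible.apply_phi_add_apply_phi (hF : S.Admissible F) (x y z : V) :
    F x y (S.phi z) + F x z (S.phi y) =
      S.eta y * F x (S.phi z) S.xi + S.eta z * F x (S.phi y) S.xi := by
  obtain ⟨hsym, hadm⟩ := hF
  have h := hadm x (S.phi y) z
  simp only [S.phi_phi, S.eta_phi, map_sub, map_smul, LinearMap.sub_apply,
    LinearMap.smul_apply, smul_eq_mul, zero_mul, add_zero] at h
  rw [hsym x (S.phi y) z, hsym x S.xi (S.phi z)] at h
  linarith

end APAP

theorem statement2_general (S : APAP n V) (F : V →ₗ[ℝ] V →ₗ[ℝ] V →ₗ[ℝ] ℝ)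
    (hF : S.Admissible F) :
    ∀ x y z : V, F (S.phi x) y z =
      (1 / 4) * (S.nij F x y z + S.nij F x z y + S.nijA F x y z + S.nijA F x z y) := by
  intro x y z
  have hsum := hF.apply_phi_add_apply_phi x y z
  have hyz := S.nij_add_nijA F x y z
  have hzy := S.nij_add_nijA F x z y
  have hswap := hF.1 (S.phi x) y z
  linear_combination (-1 / 4 : ℝ) * (hyz + hzy) + (1 / 2 : ℝ) * (hswap + hsum)

/-- `F(φx,y,z)` in terms of the pair of Nijenhuis tensors. -/
theorem statement2 (hn : 1 ≤ n) (S : APAP n V) (F : V →ₗ[ℝ] V →ₗ[ℝ] V →ₗ[ℝ] ℝ)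
    (hF : S.Admissible F) :
    ∀ x y z : V, F (S.phi x) y z =
      (1 / 4) * (S.nij F x y z + S.nij F x z y + S.nijA F x y z + S.nijA F x z y) :=
  statement2_general S F hF
end
end

section
/- For every admissible tensor F on V, the 1-form ω(z) = F(ξ,ξ,z) satisfies ω(z) = −(1/2)N̂(ξ,ξ,φz) for all z ∈ V, where N̂ is the associated Nijenhuis tensor of F. -/
open scoped RealInnerProductSpace

noncomputable section

variable {n : ℕ} {V : Type*} [NormedAddCommGroup V] [InnerProductSpace ℝ V]

/-- `ω(z) = -(1/2) N̂(ξ,ξ,φz)`. -/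
theorem statement4 (hn : 1 ≤ n) (S : APAP n V) (F : V →ₗ[ℝ] V →ₗ[ℝ] V →ₗ[ℝ] ℝ)
    (hF : S.Admissible F) :
    ∀ z : V, F S.xi S.xi z = -(1 / 2) * S.nijA F S.xi S.xi (S.phi z) := by
  intro z
  have hxi3 : F S.xi S.xi S.xi = 0 := by
    have h := hF.2 S.xi S.xi S.xi
    simp [S.phi_xi, S.eta_xi] at h
    linarith
  unfold APAP.nijA
  simp [S.phi_xi, S.eta_phi, S.phi_phi, hxi3]
  ring
end
end

section
/- For every admissible tensor F on V, its Nijenhuis tensor N satisfies the following identities for all x,y,z ∈ V: N(φ²x,φy,φz) = −N(φ²x,φ²y,φ²z); N(φ²x,φ²y,φ²z) = N(φx,φy,φ²z); N(x,φ²y,φ²z) = −N(x,φy,φz); N(φ²x,φ²y,z) = N(φx,φy,z); N(ξ,φy,φz) = −N(ξ,φ²y,φ²z); N(φx,φy,ξ) = N(φ²x,φ²y,ξ). -/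
open scoped RealInnerProductSpace

noncomputable section

variable {n : ℕ} {V : Type*} [NormedAddCommGroup V] [InnerProductSpace ℝ V]

/-!
Substituting `φ y` for `y` in the second admissibility condition and using `η ∘ φ = 0` gives
`F(a, φy, z) + F(a, φ²y, φz) = η(z) F(a, φy, ξ)`. Together with `φ³ = φ` this yields
`N(x, φy, φz) = -N(x, φ²y, φ²z)` and `N(φx, φy, z) = N(φ²x, φ²y, z)` for all `x, y, z`,
and each of the six identities is an instance of one of these two.
-/

namespace APAP

theorem phi_phi_phi (S : APAP n V) (x : V) : S.phi (S.phi (S.phi x)) = S.phi x := by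
  rw [S.phi_phi, S.eta_phi, zero_smul, sub_zero]

theorem trilinear_apply_phi_phi (S : APAP n V) (F : V →ₗ[ℝ] V →ₗ[ℝ] V →ₗ[ℝ] ℝ) (a b z : V) :
    F a b (S.phi (S.phi z)) = F a b z - S.eta z * F a b S.xi := by
  simp only [S.phi_phi, map_sub, map_smul, smul_eq_mul]

variable {S : APAP n V} {F : V →ₗ[ℝ] V →ₗ[ℝ] V →ₗ[ℝ] ℝ}

theorem Admissible.apply_phi_add_apply_phi_phi (hF : S.Admissible F) (a y z : V) :
    F a (S.phi y) z + F a (S.phi (S.phi y)) (S.phi z) = S.eta z * F a (S.phi y) S.xi := by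
  linear_combination hF.2 a (S.phi y) z + S.eta_phi y * F a S.xi z

theorem Admissible.nij_phi_phi_right (hF : S.Admissible F) (x y z : V) :
    S.nij F x (S.phi y) (S.phi z) = -S.nij F x (S.phi (S.phi y)) (S.phi (S.phi z)) := by
  have h₁ := hF.apply_phi_add_apply_phi_phi (S.phi x) y (S.phi z)
  have h₂ := hF.apply_phi_add_apply_phi_phi x y (S.phi (S.phi z))
  simp only [nij, phi_phi_phi, eta_phi, zero_mul, add_zero] at h₁ h₂ ⊢
  linear_combination h₁ - h₂

theorem Admissible.nij_phi_phi_left (hF : S.Admissible F) (x y z : V) :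
    S.nij F (S.phi x) (S.phi y) z = S.nij F (S.phi (S.phi x)) (S.phi (S.phi y)) z := by
  have hx := hF.apply_phi_add_apply_phi_phi (S.phi x) (S.phi y) z
  have hy := hF.apply_phi_add_apply_phi_phi (S.phi y) (S.phi x) z
  have hx' := hF.apply_phi_add_apply_phi_phi (S.phi (S.phi x)) (S.phi y) (S.phi z)
  have hy' := hF.apply_phi_add_apply_phi_phi (S.phi (S.phi y)) (S.phi x) (S.phi z)
  simp only [nij, phi_phi_phi, trilinear_apply_phi_phi, eta_phi, zero_mul] at hx hy hx' hy' ⊢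
  linear_combination hx' - hy' - hx + hy

end APAP

theorem statement5_general (S : APAP n V) (F : V →ₗ[ℝ] V →ₗ[ℝ] V →ₗ[ℝ] ℝ)
    (hF : S.Admissible F) :
    (∀ x y z : V, S.nij F (S.phi (S.phi x)) (S.phi y) (S.phi z) =
      -S.nij F (S.phi (S.phi x)) (S.phi (S.phi y)) (S.phi (S.phi z))) ∧
    (∀ x y z : V, S.nij F (S.phi (S.phi x)) (S.phi (S.phi y)) (S.phi (S.phi z)) =
      S.nij F (S.phi x) (S.phi y) (S.phi (S.phi z))) ∧
    (∀ x y z : V, S.nij F x (S.phi (S.phi y)) (S.phi (S.phi z)) =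
      -S.nij F x (S.phi y) (S.phi z)) ∧
    (∀ x y z : V, S.nij F (S.phi (S.phi x)) (S.phi (S.phi y)) z =
      S.nij F (S.phi x) (S.phi y) z) ∧
    (∀ y z : V, S.nij F S.xi (S.phi y) (S.phi z) =
      -S.nij F S.xi (S.phi (S.phi y)) (S.phi (S.phi z))) ∧
    (∀ x y : V, S.nij F (S.phi x) (S.phi y) S.xi =
      S.nij F (S.phi (S.phi x)) (S.phi (S.phi y)) S.xi) :=
  ⟨fun x _ _ => hF.nij_phi_phi_right (S.phi (S.phi x)) _ _,
    fun _ _ _ => (hF.nij_phi_phi_left _ _ _).symm,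
    fun x y z => by rw [hF.nij_phi_phi_right x y z, neg_neg],
    fun _ _ _ => (hF.nij_phi_phi_left _ _ _).symm,
    fun _ _ => hF.nij_phi_phi_right S.xi _ _,
    fun _ _ => hF.nij_phi_phi_left _ _ _⟩

/-- properties of the Nijenhuis tensor. -/
theorem statement5 (hn : 1 ≤ n) (S : APAP n V) (F : V →ₗ[ℝ] V →ₗ[ℝ] V →ₗ[ℝ] ℝ)
    (hF : S.Admissible F) :
    (∀ x y z : V, S.nij F (S.phi (S.phi x)) (S.phi y) (S.phi z) =
      -S.nij F (S.phi (S.phi x)) (S.phi (S.phi y)) (S.phi (S.phi z))) ∧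
    (∀ x y z : V, S.nij F (S.phi (S.phi x)) (S.phi (S.phi y)) (S.phi (S.phi z)) =
      S.nij F (S.phi x) (S.phi y) (S.phi (S.phi z))) ∧
    (∀ x y z : V, S.nij F x (S.phi (S.phi y)) (S.phi (S.phi z)) =
      -S.nij F x (S.phi y) (S.phi z)) ∧
    (∀ x y z : V, S.nij F (S.phi (S.phi x)) (S.phi (S.phi y)) z =
      S.nij F (S.phi x) (S.phi y) z) ∧
    (∀ y z : V, S.nij F S.xi (S.phi y) (S.phi z) =
      -S.nij F S.xi (S.phi (S.phi y)) (S.phi (S.phi z))) ∧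
    (∀ x y : V, S.nij F (S.phi x) (S.phi y) S.xi =
      S.nij F (S.phi (S.phi x)) (S.phi (S.phi y)) S.xi) :=
  statement5_general S F hF
end
end

section
/- For every admissible tensor F on V, its associated Nijenhuis tensor N̂ satisfies the following identities for all x,y,z ∈ V: N̂(φ²x,φy,φz) = −N̂(φ²x,φ²y,φ²z); N̂(φ²x,φ²y,φ²z) = N̂(φx,φy,φ²z); N̂(x,φ²y,φ²z) = −N̂(x,φy,φz); N̂(φ²x,φ²y,z) = N̂(φx,φy,z); N̂(ξ,φy,φz) = −N̂(ξ,φ²y,φ²z); N̂(φx,φy,ξ) = N̂(φ²x,φ²y,ξ). -/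
open scoped RealInnerProductSpace

noncomputable section

variable {n : ℕ} {V : Type*} [NormedAddCommGroup V] [InnerProductSpace ℝ V]

/-- properties of the associated Nijenhuis tensor. -/
theorem statement6 (hn : 1 ≤ n) (S : APAP n V) (F : V →ₗ[ℝ] V →ₗ[ℝ] V →ₗ[ℝ] ℝ)
    (hF : S.Admissible F) :
    (∀ x y z : V, S.nijA F (S.phi (S.phi x)) (S.phi y) (S.phi z) =
      -S.nijA F (S.phi (S.phi x)) (S.phi (S.phi y)) (S.phi (S.phi z))) ∧
    (∀ x y z : V, S.nijA F (S.phi (S.phi x)) (S.phi (S.phi y)) (S.phi (S.phi z)) =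
      S.nijA F (S.phi x) (S.phi y) (S.phi (S.phi z))) ∧
    (∀ x y z : V, S.nijA F x (S.phi (S.phi y)) (S.phi (S.phi z)) =
      -S.nijA F x (S.phi y) (S.phi z)) ∧
    (∀ x y z : V, S.nijA F (S.phi (S.phi x)) (S.phi (S.phi y)) z =
      S.nijA F (S.phi x) (S.phi y) z) ∧
    (∀ y z : V, S.nijA F S.xi (S.phi y) (S.phi z) =
      -S.nijA F S.xi (S.phi (S.phi y)) (S.phi (S.phi z))) ∧
    (∀ x y : V, S.nijA F (S.phi x) (S.phi y) S.xi =
      S.nijA F (S.phi (S.phi x)) (S.phi (S.phi y)) S.xi) := by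
  obtain ⟨hsym, hadm⟩ := hF
  have hη2 : ∀ x : V, S.eta (S.phi (S.phi x)) = 0 := fun x => S.eta_phi _
  have hφ3 : ∀ x : V, S.phi (S.phi (S.phi x)) = S.phi x := by
    intro x
    rw [S.phi_phi x, map_sub, map_smul, S.phi_xi, smul_zero, sub_zero]
  -- L1 : F a (φ²y) (φ²z) = -F a (φy) (φz)
  have L1 : ∀ a y z : V,
      F a (S.phi (S.phi y)) (S.phi (S.phi z)) = -F a (S.phi y) (S.phi z) := by
    intro a y z
    have h := hadm a (S.phi (S.phi y)) (S.phi (S.phi z))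
    rw [hφ3, hφ3, hη2, hη2] at h
    simp only [zero_mul, add_zero] at h
    exact h
  -- Lmix : F a (φ²y) (φz) = -F a (φy) (φ²z)
  have Lmix : ∀ a y z : V,
      F a (S.phi (S.phi y)) (S.phi z) = -F a (S.phi y) (S.phi (S.phi z)) := by
    intro a y z
    have h := hadm a (S.phi z) (S.phi (S.phi y))
    rw [hφ3, S.eta_phi, hη2] at h
    simp only [zero_mul, add_zero] at h
    rw [hsym a (S.phi (S.phi y)) (S.phi z), h, hsym a (S.phi (S.phi z)) (S.phi y)]
  -- Lgen : F a (φy) z = -F a (φ²y) (φz) + η z * F a (φy) ξ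
  have Lgen : ∀ a y z : V, F a (S.phi y) z =
      -F a (S.phi (S.phi y)) (S.phi z) + S.eta z * F a (S.phi y) S.xi := by
    intro a y z
    have h := hadm a (S.phi y) z
    rw [S.eta_phi] at h
    simp only [zero_mul, add_zero, zero_add] at h
    linarith
  -- Lgen2 : F a (φ²y) z = -F a (φy) (φz) + η z * F a (φ²y) ξ
  have Lgen2 : ∀ a y z : V, F a (S.phi (S.phi y)) z =
      -F a (S.phi y) (S.phi z) + S.eta z * F a (S.phi (S.phi y)) S.xi := by
    intro a y z
    have h := hadm a (S.phi (S.phi y)) z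
    rw [hφ3, hη2] at h
    simp only [zero_mul, add_zero, zero_add] at h
    linarith
  have id4 : ∀ x y z : V, S.nijA F (S.phi (S.phi x)) (S.phi (S.phi y)) z =
      S.nijA F (S.phi x) (S.phi y) z := by
    intro x y z
    simp only [APAP.nijA, hφ3]
    have h1 := Lgen2 (S.phi x) y z
    have h2 := Lgen2 (S.phi y) x z
    have h3 := Lgen (S.phi (S.phi x)) y z
    have h4 := Lgen (S.phi (S.phi y)) x z
    linear_combination h1 + h2 - h3 - h4
  refine ⟨?_, ?_, ?_, id4, ?_, ?_⟩
  · -- identity 1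
    intro x y z
    simp only [APAP.nijA, hφ3, hη2, S.eta_phi, zero_mul, add_zero]
    have h1 := L1 (S.phi x) y z
    have h2 := Lmix (S.phi (S.phi x)) y z
    linarith
  · -- identity 2 from id4
    intro x y z
    exact id4 x y (S.phi (S.phi z))
  · -- identity 3
    intro x y z
    simp only [APAP.nijA, hφ3, hη2, S.eta_phi, zero_mul, add_zero]
    have h1 := L1 (S.phi x) y z
    have h2 := Lmix x y z
    have h3 := Lmix x z y
    have h4 := hsym x (S.phi (S.phi y)) (S.phi z)
    have h5 := hsym x (S.phi (S.phi z)) (S.phi y)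
    have h6 := hsym x (S.phi y) (S.phi (S.phi z))
    have h7 := hsym x (S.phi z) (S.phi (S.phi y))
    linarith
  · -- identity 5
    intro y z
    simp only [APAP.nijA, hφ3, hη2, S.eta_phi, S.phi_xi, map_zero,
      LinearMap.zero_apply, zero_mul, add_zero, zero_add, sub_zero]
    have h2 := Lmix S.xi y z
    have h3 := Lmix S.xi z y
    have h4 := hsym S.xi (S.phi (S.phi y)) (S.phi z)
    have h5 := hsym S.xi (S.phi (S.phi z)) (S.phi y)
    have h6 := hsym S.xi (S.phi y) (S.phi (S.phi z))
    have h7 := hsym S.xi (S.phi z) (S.phi (S.phi y))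
    linarith
  · -- identity 6
    intro x y
    simp only [APAP.nijA, hφ3, S.phi_xi, map_zero, LinearMap.zero_apply,
      S.eta_xi, one_mul]
    ring
end
end

section
/- For every admissible tensor F on V, the associated tensors N̂⁽²⁾, N̂⁽³⁾, N̂⁽⁴⁾ satisfy the following relations with the associated Nijenhuis tensor N̂ of F, for all x,y ∈ V: N̂⁽²⁾(x,y) = −N̂(x,φy,ξ) − η(y)N̂(φx,ξ,ξ); N̂⁽³⁾(x,y) = N̂(φx,ξ,y) − η(x)N̂(ξ,ξ,φy); N̂⁽⁴⁾(x) = −N̂(x,ξ,ξ) = (1/2)N̂(ξ,ξ,x); N̂⁽⁴⁾(x) = N̂⁽²⁾(φx,ξ); and N̂⁽⁴⁾(x) = −N̂⁽³⁾(φx,ξ). -/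
/-!
Taking `y = z = ξ` in the second admissibility identity gives `F(x, ξ, ξ) = 0`. With `φξ = 0`
and `φ² = 1 - η ⊗ ξ`, every evaluation of `N̂` with `ξ` among its arguments then reduces to
components of `F`, which are then matched with `N̂⁽²⁾`, `N̂⁽³⁾`, `N̂⁽⁴⁾`.
-/

open scoped RealInnerProductSpace

noncomputable section

variable {n : ℕ} {V : Type*} [NormedAddCommGroup V] [InnerProductSpace ℝ V]

/-- The tensor `N̂⁽²⁾` of `F`. -/
def APAP.nijA2 (S : APAP n V) (F : V →ₗ[ℝ] V →ₗ[ℝ] V →ₗ[ℝ] ℝ) (x y : V) : ℝ :=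
  -F x y S.xi - F y x S.xi - F (S.phi x) (S.phi y) S.xi - F (S.phi y) (S.phi x) S.xi

/-- The tensor `N̂⁽³⁾` of `F`. -/
def APAP.nijA3 (S : APAP n V) (F : V →ₗ[ℝ] V →ₗ[ℝ] V →ₗ[ℝ] ℝ) (x y : V) : ℝ :=
  F S.xi x y + F x y S.xi - F (S.phi x) (S.phi y) S.xi

/-- The tensor `N̂⁽⁴⁾` of `F`. -/
def APAP.nijA4 (S : APAP n V) (F : V →ₗ[ℝ] V →ₗ[ℝ] V →ₗ[ℝ] ℝ) (x : V) : ℝ :=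
  -F S.xi (S.phi x) S.xi

namespace APAP

theorem nijA_xi_xi_left (S : APAP n V) (F : V →ₗ[ℝ] V →ₗ[ℝ] V →ₗ[ℝ] ℝ) (z : V) :
    S.nijA F S.xi S.xi z = -2 * F S.xi S.xi (S.phi z) := by
  simp only [nijA, S.phi_xi, map_zero, LinearMap.zero_apply]
  ring

namespace Admissible

variable {S : APAP n V} {F : V →ₗ[ℝ] V →ₗ[ℝ] V →ₗ[ℝ] ℝ}

theorem apply_xi_xi (hF : S.Admissible F) (x : V) : F x S.xi S.xi = 0 := by
  have h := hF.2 x S.xi S.xi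
  simp only [S.phi_xi, map_zero, S.eta_xi, one_mul] at h
  linarith

theorem apply_phi_phi (hF : S.Admissible F) (x y z : V) :
    F x (S.phi y) (S.phi z) = -F x y z + S.eta y * F x S.xi z + S.eta z * F x y S.xi := by
  linarith [hF.2 x y z]

theorem nijA_xi_xi_phi (hF : S.Admissible F) (y : V) :
    S.nijA F S.xi S.xi (S.phi y) = -2 * F S.xi S.xi y := by
  simp only [nijA_xi_xi_left, S.phi_phi, map_sub, map_smul, smul_eq_mul, hF.apply_xi_xi]
  ring

theorem nijA_apply_phi_xi (hF : S.Admissible F) (x y : V) :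
    S.nijA F x (S.phi y) S.xi = -S.nijA2 F x y - S.eta y * F S.xi x S.xi := by
  simp only [nijA, nijA2, S.phi_xi, S.eta_xi, map_zero, S.phi_phi, map_sub, map_smul,
    LinearMap.sub_apply, LinearMap.smul_apply, smul_eq_mul, hF.apply_xi_xi]
  ring

theorem nijA_phi_xi_xi (hF : S.Admissible F) (x : V) :
    S.nijA F (S.phi x) S.xi S.xi = F S.xi x S.xi := by
  simp only [nijA, S.phi_xi, S.eta_xi, map_zero, LinearMap.zero_apply, S.phi_phi,
    map_sub, map_smul, LinearMap.sub_apply, LinearMap.smul_apply, smul_eq_mul, hF.apply_xi_xi]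
  ring

theorem nijA_phi_xi (hF : S.Admissible F) (x y : V) :
    S.nijA F (S.phi x) S.xi y = S.nijA3 F x y - 2 * S.eta x * F S.xi S.xi y := by
  simp only [nijA, nijA3, S.phi_xi, map_zero, LinearMap.zero_apply, S.phi_phi,
    map_sub, map_smul, LinearMap.sub_apply, LinearMap.smul_apply, smul_eq_mul, hF.apply_xi_xi,
    hF.apply_phi_phi, hF.1 x S.xi y, hF.1 (S.phi x) S.xi (S.phi y)]
  ring

theorem nijA_xi_xi_right (hF : S.Admissible F) (x : V) :
    S.nijA F x S.xi S.xi = F S.xi (S.phi x) S.xi := by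
  simp only [nijA, S.phi_xi, S.eta_xi, map_zero, LinearMap.zero_apply, hF.apply_xi_xi]
  ring

theorem nijA2_xi (hF : S.Admissible F) (x : V) : S.nijA2 F x S.xi = -F S.xi x S.xi := by
  simp only [nijA2, S.phi_xi, map_zero, LinearMap.zero_apply, hF.apply_xi_xi]
  ring

theorem nijA3_xi (hF : S.Admissible F) (x : V) : S.nijA3 F x S.xi = F S.xi x S.xi := by
  simp only [nijA3, S.phi_xi, map_zero, LinearMap.zero_apply, hF.apply_xi_xi]
  ring

end Admissible

end APAP

theorem statement7_general (S : APAP n V) (F : V →ₗ[ℝ] V →ₗ[ℝ] V →ₗ[ℝ] ℝ)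
    (hF : S.Admissible F) :
    (∀ x y : V, S.nijA2 F x y =
      -S.nijA F x (S.phi y) S.xi - S.eta y * S.nijA F (S.phi x) S.xi S.xi) ∧
    (∀ x y : V, S.nijA3 F x y =
      S.nijA F (S.phi x) S.xi y - S.eta x * S.nijA F S.xi S.xi (S.phi y)) ∧
    (∀ x : V, S.nijA4 F x = -S.nijA F x S.xi S.xi) ∧
    (∀ x : V, S.nijA4 F x = (1 / 2) * S.nijA F S.xi S.xi x) ∧
    (∀ x : V, S.nijA4 F x = S.nijA2 F (S.phi x) S.xi) ∧
    (∀ x : V, S.nijA4 F x = -S.nijA3 F (S.phi x) S.xi) := by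
  refine ⟨fun x y => ?_, fun x y => ?_, fun x => ?_, fun x => ?_, fun x => ?_, fun x => ?_⟩
  · rw [hF.nijA_apply_phi_xi, hF.nijA_phi_xi_xi]
    ring
  · rw [hF.nijA_phi_xi, hF.nijA_xi_xi_phi]
    ring
  · rw [hF.nijA_xi_xi_right, APAP.nijA4]
  · rw [APAP.nijA_xi_xi_left, ← hF.1, APAP.nijA4]
    ring
  · rw [hF.nijA2_xi, APAP.nijA4]
  · rw [hF.nijA3_xi, APAP.nijA4]

/-- relations between `N̂⁽²⁾`, `N̂⁽³⁾`, `N̂⁽⁴⁾` and `N̂`. -/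
theorem statement7 (hn : 1 ≤ n) (S : APAP n V) (F : V →ₗ[ℝ] V →ₗ[ℝ] V →ₗ[ℝ] ℝ)
    (hF : S.Admissible F) :
    (∀ x y : V, S.nijA2 F x y =
      -S.nijA F x (S.phi y) S.xi - S.eta y * S.nijA F (S.phi x) S.xi S.xi) ∧
    (∀ x y : V, S.nijA3 F x y =
      S.nijA F (S.phi x) S.xi y - S.eta x * S.nijA F S.xi S.xi (S.phi y)) ∧
    (∀ x : V, S.nijA4 F x = -S.nijA F x S.xi S.xi) ∧
    (∀ x : V, S.nijA4 F x = (1 / 2) * S.nijA F S.xi S.xi x) ∧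
    (∀ x : V, S.nijA4 F x = S.nijA2 F (S.phi x) S.xi) ∧
    (∀ x : V, S.nijA4 F x = -S.nijA3 F (S.phi x) S.xi) :=
  statement7_general S F hF
end
end

section
/- An admissible tensor F on V satisfies the paracontact condition 2g(x,φy) = −F(x,φy,ξ) − F(y,φx,ξ) for all x,y ∈ V if and only if F = F₁ + F₂ + F₃ + F₄' + F₇ + F₈ + F₁₀, where F₁, F₂, F₃, F₇, F₈, F₁₀ are the components of F and F₄'(x,y,z) = −g(φx,φy)η(z) − g(φx,φz)η(y) (the F₄ component with θ(ξ) = −2n). -/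
/-! Expanding the components with `φ² = id - η ⊗ ξ` and the symmetries of an admissible `F` gives
`F₁ + F₂ + F₃ + F₄' + F₇ + F₈ + F₁₀ - F = -½ (D(x,y) η(z) + D(x,z) η(y))`, where
`D(x,y) = F(x,y,ξ) + F(φy,φx,ξ) + η(x) ω(y) + 2 g(φx,φy)`. As `D(x,ξ) = 0`, the right side
vanishes identically iff `D` does, and `D = 0` is a reformulation of the paracontact condition:
both force `ω = 0` (put `x = ξ`), after which they differ by the substitution `y ↦ φy`. -/

open scoped RealInnerProductSpace

noncomputable section

variable {n : ℕ} {V : Type*} [NormedAddCommGroup V] [InnerProductSpace ℝ V]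

/-- The Lee form `θ` of `F` with respect to an orthonormal basis. -/
def APAP.leeTheta (S : APAP n V) (b : OrthonormalBasis (Fin (2 * n + 1)) ℝ V)
    (F : V →ₗ[ℝ] V →ₗ[ℝ] V →ₗ[ℝ] ℝ) (z : V) : ℝ :=
  ∑ i, F (b i) (b i) z

/-- The Lee form `θ*` of `F` with respect to an orthonormal basis. -/
def APAP.leeThetaStar (S : APAP n V) (b : OrthonormalBasis (Fin (2 * n + 1)) ℝ V)
    (F : V →ₗ[ℝ] V →ₗ[ℝ] V →ₗ[ℝ] ℝ) (z : V) : ℝ :=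
  ∑ i, F (b i) (S.phi (b i)) z

/-- The Lee form `ω` of `F`. -/
def APAP.leeOmega (S : APAP n V) (F : V →ₗ[ℝ] V →ₗ[ℝ] V →ₗ[ℝ] ℝ) (z : V) : ℝ :=
  F S.xi S.xi z

/-- The component `F₁` of `F`. -/
def APAP.comp1 (S : APAP n V) (b : OrthonormalBasis (Fin (2 * n + 1)) ℝ V)
    (F : V →ₗ[ℝ] V →ₗ[ℝ] V →ₗ[ℝ] ℝ) (x y z : V) : ℝ :=
  (1 / (2 * (n : ℝ))) *
    (⟪S.phi x, S.phi y⟫ * S.leeTheta b F (S.phi (S.phi z))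
      + ⟪S.phi x, S.phi z⟫ * S.leeTheta b F (S.phi (S.phi y))
      - ⟪x, S.phi y⟫ * S.leeTheta b F (S.phi z)
      - ⟪x, S.phi z⟫ * S.leeTheta b F (S.phi y))

/-- The component `F₂` of `F`. -/
def APAP.comp2 (S : APAP n V) (b : OrthonormalBasis (Fin (2 * n + 1)) ℝ V)
    (F : V →ₗ[ℝ] V →ₗ[ℝ] V →ₗ[ℝ] ℝ) (x y z : V) : ℝ :=
  (1 / 4) * (2 * F (S.phi (S.phi x)) (S.phi (S.phi y)) (S.phi (S.phi z))
      + F (S.phi (S.phi y)) (S.phi (S.phi z)) (S.phi (S.phi x))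
      + F (S.phi (S.phi z)) (S.phi (S.phi x)) (S.phi (S.phi y))
      - F (S.phi y) (S.phi z) (S.phi (S.phi x))
      - F (S.phi z) (S.phi y) (S.phi (S.phi x)))
    - S.comp1 b F x y z

/-- The component `F₃` of `F`. -/
def APAP.comp3 (S : APAP n V)
    (F : V →ₗ[ℝ] V →ₗ[ℝ] V →ₗ[ℝ] ℝ) (x y z : V) : ℝ :=
  (1 / 4) * (2 * F (S.phi (S.phi x)) (S.phi (S.phi y)) (S.phi (S.phi z))
      - F (S.phi (S.phi y)) (S.phi (S.phi z)) (S.phi (S.phi x))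
      - F (S.phi (S.phi z)) (S.phi (S.phi x)) (S.phi (S.phi y))
      + F (S.phi y) (S.phi z) (S.phi (S.phi x))
      + F (S.phi z) (S.phi y) (S.phi (S.phi x)))

/-- The component `F₄` of `F`. -/
def APAP.comp4 (S : APAP n V) (b : OrthonormalBasis (Fin (2 * n + 1)) ℝ V)
    (F : V →ₗ[ℝ] V →ₗ[ℝ] V →ₗ[ℝ] ℝ) (x y z : V) : ℝ :=
  (S.leeTheta b F S.xi / (2 * (n : ℝ))) *
    (⟪S.phi x, S.phi y⟫ * S.eta z + ⟪S.phi x, S.phi z⟫ * S.eta y)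

/-- The component `F₅` of `F`. -/
def APAP.comp5 (S : APAP n V) (b : OrthonormalBasis (Fin (2 * n + 1)) ℝ V)
    (F : V →ₗ[ℝ] V →ₗ[ℝ] V →ₗ[ℝ] ℝ) (x y z : V) : ℝ :=
  (S.leeThetaStar b F S.xi / (2 * (n : ℝ))) *
    (⟪x, S.phi y⟫ * S.eta z + ⟪x, S.phi z⟫ * S.eta y)

/-- The component `F₆` of `F`. -/
def APAP.comp6 (S : APAP n V) (b : OrthonormalBasis (Fin (2 * n + 1)) ℝ V)
    (F : V →ₗ[ℝ] V →ₗ[ℝ] V →ₗ[ℝ] ℝ) (x y z : V) : ℝ :=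
  (1 / 4) * ((F (S.phi (S.phi x)) (S.phi (S.phi y)) S.xi + F (S.phi (S.phi y)) (S.phi (S.phi x)) S.xi
        + F (S.phi x) (S.phi y) S.xi + F (S.phi y) (S.phi x) S.xi) * S.eta z
      + (F (S.phi (S.phi x)) (S.phi (S.phi z)) S.xi + F (S.phi (S.phi z)) (S.phi (S.phi x)) S.xi
        + F (S.phi x) (S.phi z) S.xi + F (S.phi z) (S.phi x) S.xi) * S.eta y)
    - S.comp4 b F x y z - S.comp5 b F x y z

/-- The component `F₇` of `F`. -/
def APAP.comp7 (S : APAP n V)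
    (F : V →ₗ[ℝ] V →ₗ[ℝ] V →ₗ[ℝ] ℝ) (x y z : V) : ℝ :=
  (1 / 4) * ((F (S.phi (S.phi x)) (S.phi (S.phi y)) S.xi - F (S.phi (S.phi y)) (S.phi (S.phi x)) S.xi
        + F (S.phi x) (S.phi y) S.xi - F (S.phi y) (S.phi x) S.xi) * S.eta z
      + (F (S.phi (S.phi x)) (S.phi (S.phi z)) S.xi - F (S.phi (S.phi z)) (S.phi (S.phi x)) S.xi
        + F (S.phi x) (S.phi z) S.xi - F (S.phi z) (S.phi x) S.xi) * S.eta y)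

/-- The component `F₈` of `F`. -/
def APAP.comp8 (S : APAP n V)
    (F : V →ₗ[ℝ] V →ₗ[ℝ] V →ₗ[ℝ] ℝ) (x y z : V) : ℝ :=
  (1 / 4) * ((F (S.phi (S.phi x)) (S.phi (S.phi y)) S.xi + F (S.phi (S.phi y)) (S.phi (S.phi x)) S.xi
        - F (S.phi x) (S.phi y) S.xi - F (S.phi y) (S.phi x) S.xi) * S.eta z
      + (F (S.phi (S.phi x)) (S.phi (S.phi z)) S.xi + F (S.phi (S.phi z)) (S.phi (S.phi x)) S.xi
        - F (S.phi x) (S.phi z) S.xi - F (S.phi z) (S.phi x) S.xi) * S.eta y)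

/-- The component `F₉` of `F`. -/
def APAP.comp9 (S : APAP n V)
    (F : V →ₗ[ℝ] V →ₗ[ℝ] V →ₗ[ℝ] ℝ) (x y z : V) : ℝ :=
  (1 / 4) * ((F (S.phi (S.phi x)) (S.phi (S.phi y)) S.xi - F (S.phi (S.phi y)) (S.phi (S.phi x)) S.xi
        - F (S.phi x) (S.phi y) S.xi + F (S.phi y) (S.phi x) S.xi) * S.eta z
      + (F (S.phi (S.phi x)) (S.phi (S.phi z)) S.xi - F (S.phi (S.phi z)) (S.phi (S.phi x)) S.xi
        - F (S.phi x) (S.phi z) S.xi + F (S.phi z) (S.phi x) S.xi) * S.eta y)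

/-- The component `F₁₀` of `F`. -/
def APAP.comp10 (S : APAP n V)
    (F : V →ₗ[ℝ] V →ₗ[ℝ] V →ₗ[ℝ] ℝ) (x y z : V) : ℝ :=
  S.eta x * F S.xi (S.phi (S.phi y)) (S.phi (S.phi z))

/-- The component `F₁₁` of `F`. -/
def APAP.comp11 (S : APAP n V)
    (F : V →ₗ[ℝ] V →ₗ[ℝ] V →ₗ[ℝ] ℝ) (x y z : V) : ℝ :=
  S.eta x * (S.eta y * S.leeOmega F z + S.eta z * S.leeOmega F y)

/-- The component `F₄'` (`F₄` with `θ(ξ) = -2n`). -/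
def APAP.comp4' (S : APAP n V) (x y z : V) : ℝ :=
  -⟪S.phi x, S.phi y⟫ * S.eta z - ⟪S.phi x, S.phi z⟫ * S.eta y

theorem forall_mul_add_mul_eq_zero_iff {α R : Type*} [Semiring R] {D : α → α → R} {η : α → R}
    {ξ : α} (hη : η ξ = 1) (hD : ∀ x, D x ξ = 0) :
    (∀ x y z, D x y * η z + D x z * η y = 0) ↔ ∀ x y, D x y = 0 := by
  refine ⟨fun h x y => ?_, fun h x y z => by simp [h]⟩
  simpa [hη, hD] using h x y ξ

namespace APAP

variable (S : APAP n V)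

theorem inner_phi_left (x y : V) : ⟪S.phi x, y⟫ = ⟪x, S.phi y⟫ := by
  simpa [S.phi_phi, inner_sub_right, real_inner_smul_right, S.inner_xi, S.eta_phi]
    using S.compat x (S.phi y)

theorem inner_phi_phi_right (x y : V) : ⟪x, S.phi (S.phi y)⟫ = ⟪S.phi x, S.phi y⟫ := by
  rw [S.compat, S.phi_phi, inner_sub_right, real_inner_smul_right, S.inner_xi]
  ring

def paracontactDefect (F : V →ₗ[ℝ] V →ₗ[ℝ] V →ₗ[ℝ] ℝ) (x y : V) : ℝ :=
  F x y S.xi + F (S.phi y) (S.phi x) S.xi + S.eta x * S.leeOmega F y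
    + 2 * ⟪S.phi x, S.phi y⟫

variable {S} {F : V →ₗ[ℝ] V →ₗ[ℝ] V →ₗ[ℝ] ℝ}

theorem Admissible.apply_xi_xi_s14 (hF : S.Admissible F) (x : V) : F x S.xi S.xi = 0 := by
  have h := hF.2 x S.xi S.xi
  simp only [S.phi_xi, map_zero, S.eta_xi, one_mul] at h
  linarith

theorem Admissible.paracontactDefect_xi_right (hF : S.Admissible F) (x : V) :
    S.paracontactDefect F x S.xi = 0 := by
  simp [paracontactDefect, leeOmega, S.phi_xi, hF.apply_xi_xi_s14]

theorem Admissible.paracontactDefect_xi_left (hF : S.Admissible F) (y : V) :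
    S.paracontactDefect F S.xi y = 2 * S.leeOmega F y := by
  simp only [paracontactDefect, leeOmega, S.phi_xi, map_zero, LinearMap.zero_apply,
    inner_zero_left, S.eta_xi, hF.1 S.xi y S.xi]
  ring

theorem Admissible.sum_components_sub_self (b : OrthonormalBasis (Fin (2 * n + 1)) ℝ V)
    (hF : S.Admissible F) (x y z : V) :
    S.comp1 b F x y z + S.comp2 b F x y z + S.comp3 F x y z
        + S.comp4' x y z + S.comp7 F x y z + S.comp8 F x y z + S.comp10 F x y z - F x y z
      = -(1 / 2) * (S.paracontactDefect F x y * S.eta z + S.paracontactDefect F x z * S.eta y) := by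
  simp only [comp1, comp2, comp3, comp4', comp7, comp8, comp10, paracontactDefect, leeOmega,
    S.phi_phi, map_sub, map_smul, LinearMap.sub_apply, LinearMap.smul_apply, smul_eq_mul]
  linear_combination (-(S.eta y)) * hF.1 x S.xi z
    + (1 / 2) * (S.eta x * S.eta z) * hF.1 S.xi S.xi y
    - (1 / 2) * (S.eta x * S.eta y) * hF.1 S.xi z S.xi
    + (S.eta x * S.eta y * S.eta z) * hF.apply_xi_xi_s14 S.xi

/-- On `im φ` take `x = ξ` in the paracontact condition; on `ξ` use admissibility. -/
theorem Admissible.leeOmega_eq_zero_of_paracontact (hF : S.Admissible F)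
    (hP : ∀ x y : V, 2 * ⟪x, S.phi y⟫ = -F x (S.phi y) S.xi - F y (S.phi x) S.xi) (u : V) :
    S.leeOmega F u = 0 := by
  have hphi : ∀ v, S.leeOmega F (S.phi v) = 0 := fun v => by
    have h := hP S.xi v
    rw [← S.inner_phi_left, S.phi_xi, inner_zero_left, map_zero, LinearMap.zero_apply,
      ← hF.1] at h
    simp only [leeOmega]
    linarith
  have h := hphi (S.phi u)
  rwa [S.phi_phi, leeOmega, map_sub, map_smul, hF.apply_xi_xi_s14, smul_zero, sub_zero] at h

theorem Admissible.paracontact_iff_paracontactDefect_eq_zero (hF : S.Admissible F) :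
    (∀ x y : V, 2 * ⟪x, S.phi y⟫ = -F x (S.phi y) S.xi - F y (S.phi x) S.xi) ↔
      ∀ x y, S.paracontactDefect F x y = 0 := by
  constructor
  · intro hP x y
    have h := hP x (S.phi y)
    rw [S.inner_phi_phi_right, S.phi_phi, map_sub, map_smul, LinearMap.sub_apply,
      LinearMap.smul_apply, hF.apply_xi_xi_s14, smul_zero, sub_zero] at h
    simp only [paracontactDefect, hF.leeOmega_eq_zero_of_paracontact hP]
    linarith
  · intro hD x y
    have hω : ∀ v, S.leeOmega F v = 0 := fun v => by
      simpa [hF.paracontactDefect_xi_left] using hD S.xi v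
    have h := hD x (S.phi y)
    simp only [paracontactDefect, hω, S.phi_phi, map_sub, map_smul, LinearMap.sub_apply,
      LinearMap.smul_apply, smul_eq_mul, S.inner_phi_left, S.phi_xi, smul_zero, sub_zero] at h
    have hξ : F S.xi (S.phi x) S.xi = 0 := by rw [hF.1]; exact hω _
    rw [hξ] at h
    linarith

end APAP

theorem statement14_general (S : APAP n V)
    (b : OrthonormalBasis (Fin (2 * n + 1)) ℝ V)
    (F : V →ₗ[ℝ] V →ₗ[ℝ] V →ₗ[ℝ] ℝ) (hF : S.Admissible F) :
    (∀ x y : V, 2 * ⟪x, S.phi y⟫ = -F x (S.phi y) S.xi - F y (S.phi x) S.xi) ↔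
      (∀ x y z : V, F x y z = S.comp1 b F x y z + S.comp2 b F x y z + S.comp3 F x y z
        + S.comp4' x y z + S.comp7 F x y z + S.comp8 F x y z + S.comp10 F x y z) := by
  rw [hF.paracontact_iff_paracontactDefect_eq_zero,
    ← forall_mul_add_mul_eq_zero_iff S.eta_xi hF.paracontactDefect_xi_right]
  refine forall₃_congr fun x y z => ?_
  have h := hF.sum_components_sub_self b x y z
  constructor <;> intro _ <;> linarith

/-- the paracontact condition holds iff
`F = F₁ + F₂ + F₃ + F₄' + F₇ + F₈ + F₁₀`. -/
theorem statement14 (hn : 1 ≤ n) (S : APAP n V)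
    (b : OrthonormalBasis (Fin (2 * n + 1)) ℝ V)
    (F : V →ₗ[ℝ] V →ₗ[ℝ] V →ₗ[ℝ] ℝ) (hF : S.Admissible F) :
    (∀ x y : V, 2 * ⟪x, S.phi y⟫ = -F x (S.phi y) S.xi - F y (S.phi x) S.xi) ↔
      (∀ x y z : V, F x y z = S.comp1 b F x y z + S.comp2 b F x y z + S.comp3 F x y z
        + S.comp4' x y z + S.comp7 F x y z + S.comp8 F x y z + S.comp10 F x y z) :=
  statement14_general S b F hF
end
end

section
/- An admissible tensor F on V satisfies −F(x,φy,ξ) − F(y,φx,ξ) = 0 for all x,y ∈ V (i.e. the Lie derivative L_ξ g vanishes, so that ξ is a Killing vector field) if and only if F = F₁ + F₂ + F₃ + F₇ + F₈ + F₁₀, the sum of its components corresponding to the classes 𝔽₁, 𝔽₂, 𝔽₃, 𝔽₇, 𝔽₈, 𝔽₁₀. -/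
open scoped RealInnerProductSpace

noncomputable section

variable {n : ℕ} {V : Type*} [NormedAddCommGroup V] [InnerProductSpace ℝ V]

/-- `ξ` is Killing (`L_ξ g = 0`) iff `F = F₁ + F₂ + F₃ + F₇ + F₈ + F₁₀`. -/
theorem statement15 (hn : 1 ≤ n) (S : APAP n V)
    (b : OrthonormalBasis (Fin (2 * n + 1)) ℝ V)
    (F : V →ₗ[ℝ] V →ₗ[ℝ] V →ₗ[ℝ] ℝ) (hF : S.Admissible F) :
    (∀ x y : V, -F x (S.phi y) S.xi - F y (S.phi x) S.xi = 0) ↔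
      (∀ x y z : V, F x y z = S.comp1 b F x y z + S.comp2 b F x y z + S.comp3 F x y z
        + S.comp7 F x y z + S.comp8 F x y z + S.comp10 F x y z) := by
  obtain ⟨hsym, hadm⟩ := hF
  -- basic facts
  have h0 : ∀ x : V, F x S.xi S.xi = 0 := by
    intro x
    have h := hadm x S.xi S.xi
    rw [S.phi_xi, S.eta_xi] at h
    simp only [map_zero, LinearMap.zero_apply, one_mul, neg_zero, zero_add] at h
    linarith
  have hxexp : ∀ x : V, x = S.phi (S.phi x) + S.eta x • S.xi := by
    intro x; rw [S.phi_phi]; abel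
  have hphi3 : ∀ x : V, S.phi (S.phi (S.phi x)) = S.phi x := by
    intro x; rw [S.phi_phi, S.eta_phi]; simp
  have hPxi : S.phi (S.phi S.xi) = 0 := by
    rw [S.phi_xi, map_zero]
  have h2 : ∀ w : V, F S.xi S.xi (S.phi (S.phi w)) = F S.xi S.xi w := by
    intro w
    rw [S.phi_phi, map_sub, map_smul, smul_eq_mul, h0, mul_zero, sub_zero]
  -- expansion identity
  have E : ∀ x y z : V, F x y z =
      F (S.phi (S.phi x)) (S.phi (S.phi y)) (S.phi (S.phi z))
      + S.eta z * F (S.phi (S.phi x)) (S.phi (S.phi y)) S.xi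
      + S.eta y * F (S.phi (S.phi x)) (S.phi (S.phi z)) S.xi
      + S.eta x * F S.xi (S.phi (S.phi y)) (S.phi (S.phi z))
      + S.eta x * S.eta y * F S.xi S.xi z
      + S.eta x * S.eta z * F S.xi S.xi y := by
    intro x y z
    conv_lhs => rw [hxexp x, hxexp y, hxexp z]
    simp only [map_add, map_smul, LinearMap.add_apply, LinearMap.smul_apply, smul_eq_mul]
    linear_combination (S.eta y) * hsym (S.phi (S.phi x)) S.xi (S.phi (S.phi z))
      + (S.eta y * S.eta z) * h0 (S.phi (S.phi x))
      + (S.eta x * S.eta z) * hsym S.xi (S.phi (S.phi y)) S.xi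
      + (S.eta x * S.eta z) * h2 y
      + (S.eta x * S.eta y) * h2 z
      + (S.eta x * S.eta y * S.eta z) * h0 S.xi
  constructor
  · intro hK x y z
    have h1 : ∀ w : V, F S.xi (S.phi w) S.xi = 0 := by
      intro w
      have h := hK S.xi w
      rw [S.phi_xi] at h
      simp only [map_zero, LinearMap.zero_apply] at h
      linarith
    have hω : ∀ w : V, F S.xi S.xi w = 0 := by
      intro w
      have ha := hsym S.xi S.xi w
      have hb := hsym S.xi S.xi (S.phi (S.phi w))
      have hc := h1 (S.phi w)
      have hd := h2 w
      linarith
    have hAB : ∀ u v : V, F (S.phi (S.phi u)) (S.phi (S.phi v)) S.xi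
        + F (S.phi v) (S.phi u) S.xi = 0 := by
      intro u v
      have h := hK (S.phi (S.phi u)) (S.phi v)
      rw [hphi3] at h
      linarith
    simp only [APAP.comp1, APAP.comp2, APAP.comp3, APAP.comp7, APAP.comp8, APAP.comp10]
    linear_combination (E x y z) + (S.eta z / 2) * hAB x y + (S.eta y / 2) * hAB x z
      + (S.eta x * S.eta y) * hω z + (S.eta x * S.eta z) * hω y
  · intro hS
    have R : ∀ x y z : V,
        S.eta z * (F (S.phi (S.phi x)) (S.phi (S.phi y)) S.xi + F (S.phi y) (S.phi x) S.xi)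
        + S.eta y * (F (S.phi (S.phi x)) (S.phi (S.phi z)) S.xi + F (S.phi z) (S.phi x) S.xi)
        + 2 * S.eta x * S.eta y * F S.xi S.xi z
        + 2 * S.eta x * S.eta z * F S.xi S.xi y = 0 := by
      intro x y z
      have h := hS x y z
      simp only [APAP.comp1, APAP.comp2, APAP.comp3, APAP.comp7, APAP.comp8, APAP.comp10] at h
      linear_combination 2 * h - 2 * (E x y z)
    have hω : ∀ w : V, F S.xi S.xi w = 0 := by
      intro w
      have h := R S.xi w S.xi
      rw [hPxi, S.phi_xi, S.eta_xi] at h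
      simp only [map_zero, LinearMap.zero_apply, zero_add, add_zero, one_mul, mul_one,
        mul_zero, zero_mul] at h
      linear_combination h / 2 - S.eta w * h0 S.xi
    have hAB : ∀ u v : V, F (S.phi (S.phi u)) (S.phi (S.phi v)) S.xi
        + F (S.phi v) (S.phi u) S.xi = 0 := by
      intro u v
      have h := R u v S.xi
      rw [hPxi, S.phi_xi, S.eta_xi] at h
      simp only [map_zero, LinearMap.zero_apply, zero_add, add_zero, one_mul, mul_one,
        mul_zero, zero_mul] at h
      linear_combination h - 2 * S.eta u * S.eta v * hω S.xi - 2 * S.eta u * hω v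
    intro x y
    have e1 : F x (S.phi y) S.xi = F (S.phi (S.phi x)) (S.phi y) S.xi
        + S.eta x * F S.xi (S.phi y) S.xi := by
      nth_rewrite 1 [hxexp x]
      simp only [map_add, map_smul, LinearMap.add_apply, LinearMap.smul_apply, smul_eq_mul]
    have e2 : F y (S.phi x) S.xi = F (S.phi (S.phi y)) (S.phi x) S.xi
        + S.eta y * F S.xi (S.phi x) S.xi := by
      nth_rewrite 1 [hxexp y]
      simp only [map_add, map_smul, LinearMap.add_apply, LinearMap.smul_apply, smul_eq_mul]
    have e3 : F S.xi (S.phi y) S.xi = 0 := by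
      rw [hsym S.xi (S.phi y) S.xi]; exact hω (S.phi y)
    have e4 : F S.xi (S.phi x) S.xi = 0 := by
      rw [hsym S.xi (S.phi x) S.xi]; exact hω (S.phi x)
    have h := hAB x (S.phi y)
    rw [hphi3] at h
    linear_combination -e1 - e2 - S.eta x * e3 - S.eta y * e4 - h
end
end
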